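/- Let a ∈ ℝ^n lie in A_s and let δ > 0 satisfy δ < |a_j| for every index j with a_j ≠ 0. Then for every x in the closed ball of radius δ/2 around a, every projection x⁺ of x onto A_s (i.e., every x⁺ ∈ A_s with ‖x − x⁺‖ ≤ ‖x − z‖ for all z ∈ A_s) satisfies ‖x⁺ − a‖ ≤ δ/2; that is, P_{A_s} maps the ball B_{δ/2}(a) into itself. -/

import Mathlib

/-- Number of nonzero entries of a vector (the ℓ₀-"norm"). -/
noncomputable def sparsity {n : ℕ} (x : EuclideanSpace ℝ (Fin n)) : ℕ :=
  (Finset.univ.filter (fun i => x i ≠ 0)).card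

/-- `A_s`, the set of vectors with at most `s` nonzero entries. -/
def Asp (n s : ℕ) : Set (EuclideanSpace ℝ (Fin n)) := {x | sparsity x ≤ s}

/-- The (possibly set-valued) projector onto a set `Ω`. -/
def projSet {n : ℕ} (Ω : Set (EuclideanSpace ℝ (Fin n))) (x : EuclideanSpace ℝ (Fin n)) :
    Set (EuclideanSpace ℝ (Fin n)) :=
  {y | y ∈ Ω ∧ ∀ z ∈ Ω, ‖x - y‖ ≤ ‖x - z‖}

/-!
A projection `xp` of `x` onto `A_s` copies some entries of `x` and zeroes the rest, and it never
zeroes an entry of `x` while keeping a smaller one or while it has room for more nonzeros: otherwise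
restoring (or swapping in) that entry gives a strictly closer point of `A_s`. Near `a`, the entries of
`x` on the support of `a` exceed `δ / 2` and those off it do not, so `xp` keeps the whole support of
`a`; hence `|xp i - a i| ≤ |x i - a i|` for every `i`, and `‖xp - a‖ ≤ ‖x - a‖ ≤ δ / 2`.
-/

open Function WithLp

namespace EuclideanSpace

variable {ι : Type*} [Fintype ι]

theorem norm_le_norm_of_abs_apply_le {u v : EuclideanSpace ℝ ι} (h : ∀ i, |u i| ≤ |v i|) :
    ‖u‖ ≤ ‖v‖ := by
  rw [← sq_le_sq₀ (norm_nonneg u) (norm_nonneg v), real_norm_sq_eq, real_norm_sq_eq]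
  exact Finset.sum_le_sum fun i _ => sq_le_sq.mpr (h i)

theorem norm_sub_update_sq [DecidableEq ι] (x y : EuclideanSpace ℝ ι) (j : ι) (c : ℝ) :
    ‖x - toLp 2 (update y.ofLp j c)‖ ^ 2 = ‖x - y‖ ^ 2 - (x j - y j) ^ 2 + (x j - c) ^ 2 := by
  simp only [real_norm_sq_eq, PiLp.sub_apply]
  rw [← Finset.add_sum_erase _ _ (Finset.mem_univ j), ← Finset.add_sum_erase _ _ (Finset.mem_univ j),
    update_self]
  have : ∀ i ∈ Finset.univ.erase j, (x i - update y.ofLp j c i) ^ 2 = (x i - y i) ^ 2 :=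
    fun i hi => by rw [update_of_ne (Finset.ne_of_mem_erase hi)]
  rw [Finset.sum_congr rfl this]
  ring

end EuclideanSpace

open EuclideanSpace

section Sparsity

variable {n : ℕ}

theorem sparsity_update_le (y : EuclideanSpace ℝ (Fin n)) (j : Fin n) (c : ℝ) :
    sparsity (toLp 2 (update y.ofLp j c)) ≤ sparsity y + 1 := by
  refine (Finset.card_le_card fun i hi => ?_).trans (Finset.card_insert_le j _)
  rcases eq_or_ne i j with rfl | hij
  · exact Finset.mem_insert_self _ _
  · exact Finset.mem_insert_of_mem (by simpa [update_of_ne hij] using hi)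

theorem sparsity_update_zero_add_one {y : EuclideanSpace ℝ (Fin n)} {k : Fin n} (hk : y k ≠ 0) :
    sparsity (toLp 2 (update y.ofLp k 0)) + 1 = sparsity y := by
  have : Finset.univ.filter (fun i => toLp 2 (update y.ofLp k 0) i ≠ 0) =
      (Finset.univ.filter (fun i => y i ≠ 0)).erase k := by
    ext i
    rcases eq_or_ne i k with rfl | hik <;> simp [*]
  rw [sparsity, this, Finset.card_erase_add_one (by simpa using hk), sparsity]

end Sparsity

namespace projSet

variable {n s : ℕ} {x xp : EuclideanSpace ℝ (Fin n)}

theorem norm_sq_le (hxp : xp ∈ projSet (Asp n s) x) {z : EuclideanSpace ℝ (Fin n)}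
    (hz : z ∈ Asp n s) : ‖x - xp‖ ^ 2 ≤ ‖x - z‖ ^ 2 :=
  pow_le_pow_left₀ (norm_nonneg _) (hxp.2 z hz) 2

theorem apply_eq_of_update_mem (hxp : xp ∈ projSet (Asp n s) x) {j : Fin n}
    (h : toLp 2 (update xp.ofLp j (x j)) ∈ Asp n s) : xp j = x j := by
  have hle := norm_sq_le hxp h
  rw [norm_sub_update_sq, sub_self] at hle
  have hsq : (x j - xp j) ^ 2 = 0 := le_antisymm (by linarith) (sq_nonneg _)
  exact (sub_eq_zero.mp (pow_eq_zero_iff two_ne_zero |>.mp hsq)).symm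

theorem apply_eq_of_apply_ne_zero (hxp : xp ∈ projSet (Asp n s) x) {j : Fin n}
    (hj : xp j ≠ 0) : xp j = x j := by
  refine apply_eq_of_update_mem hxp ?_
  have h₁ : sparsity (toLp 2 (update xp.ofLp j 0)) + 1 = sparsity xp :=
    sparsity_update_zero_add_one hj
  have h₂ := sparsity_update_le (toLp 2 (update xp.ofLp j 0)) j (x j)
  have h₃ : sparsity xp ≤ s := hxp.1
  simp only [update_idem] at h₂
  change _ ≤ s
  omega

theorem apply_eq_zero_or_eq (hxp : xp ∈ projSet (Asp n s) x) (j : Fin n) :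
    xp j = 0 ∨ xp j = x j :=
  or_iff_not_imp_left.mpr (apply_eq_of_apply_ne_zero hxp)

theorem apply_eq_of_sparsity_lt (hxp : xp ∈ projSet (Asp n s) x) (hs : sparsity xp < s)
    (j : Fin n) : xp j = x j :=
  apply_eq_of_update_mem hxp ((sparsity_update_le xp j (x j)).trans hs)

theorem abs_apply_le_of_apply_eq_zero (hxp : xp ∈ projSet (Asp n s) x) {j k : Fin n}
    (hj : xp j = 0) (hk : xp k ≠ 0) : |x j| ≤ |x k| := by
  have hjk : j ≠ k := fun h => hk (h ▸ hj)
  set w := toLp 2 (update xp.ofLp k 0)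
  have hw : sparsity (toLp 2 (update w.ofLp j (x j))) ≤ s := by
    have h₁ : sparsity w + 1 = sparsity xp := sparsity_update_zero_add_one hk
    have h₂ := sparsity_update_le w j (x j)
    have h₃ : sparsity xp ≤ s := hxp.1
    omega
  have hwj : w j = 0 := by simp [w, update_of_ne hjk, hj]
  have hle := norm_sq_le hxp hw
  rw [norm_sub_update_sq, norm_sub_update_sq, hwj, apply_eq_of_apply_ne_zero hxp hk] at hle
  exact sq_le_sq.mp (by linarith)

theorem apply_eq_of_abs_lt (hxp : xp ∈ projSet (Asp n s) x) {a : EuclideanSpace ℝ (Fin n)}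
    (ha : a ∈ Asp n s) (hsep : ∀ i j, a i = 0 → a j ≠ 0 → |x i| < |x j|) {j : Fin n}
    (hj : a j ≠ 0) : xp j = x j := by
  by_contra hne
  have hj0 : xp j = 0 := (apply_eq_zero_or_eq hxp j).resolve_right hne
  have hs : s ≤ sparsity xp := not_lt.mp fun h => hne (apply_eq_of_sparsity_lt hxp h j)
  obtain ⟨k, hk, hak⟩ : ∃ k, xp k ≠ 0 ∧ a k = 0 := by
    by_contra! hsub
    have hssub : Finset.univ.filter (fun i => xp i ≠ 0) ⊂ Finset.univ.filter (fun i => a i ≠ 0) :=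
      Finset.ssubset_iff_of_subset (fun i => by simpa using hsub i) |>.mpr ⟨j, by simp [hj, hj0]⟩
    exact (Finset.card_lt_card hssub).not_ge (ha.trans hs)
  exact (abs_apply_le_of_apply_eq_zero hxp hj0 hk).not_gt (hsep k j hak hj)

theorem norm_sub_le_of_abs_lt (hxp : xp ∈ projSet (Asp n s) x) {a : EuclideanSpace ℝ (Fin n)}
    (ha : a ∈ Asp n s) (hsep : ∀ i j, a i = 0 → a j ≠ 0 → |x i| < |x j|) :
    ‖xp - a‖ ≤ ‖x - a‖ := by
  refine norm_le_norm_of_abs_apply_le fun i => ?_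
  by_cases hai : a i = 0
  · rcases apply_eq_zero_or_eq hxp i with h | h <;> simp [h, hai]
  · simp [apply_eq_of_abs_lt hxp ha hsep hai]

end projSet

theorem stmt0 {n s : ℕ} (a : EuclideanSpace ℝ (Fin n)) (ha : a ∈ Asp n s)
    (δ : ℝ) (hsmall : ∀ j, a j ≠ 0 → δ < |a j|) :
    ∀ x ∈ Metric.closedBall a (δ / 2), ∀ xp ∈ projSet (Asp n s) x,
      ‖xp - a‖ ≤ δ / 2 := by
  intro x hx xp hxp
  have hxa : ‖x - a‖ ≤ δ / 2 := mem_closedBall_iff_norm.mp hx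
  have hcoord (i : Fin n) : |x i - a i| ≤ δ / 2 := (PiLp.norm_apply_le (x - a) i).trans hxa
  refine (projSet.norm_sub_le_of_abs_lt hxp ha fun i j hai haj => ?_).trans hxa
  have hxi : |x i| ≤ δ / 2 := by simpa [hai] using hcoord i
  have hxj : |a j| - |x j| ≤ |x j - a j| := abs_sub_comm (x j) (a j) ▸ abs_sub_abs_le_abs_sub _ _
  linarith [hcoord j, hsmall j haj]
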